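/- Let N ≥ 3 be odd, φ ∈ ℝ^N, and let θ be a stationary point of F_φ (with θ_N = 0) labelled by q_1,…,q_{N−1} ∈ {0,1}, i.e. s_k ≡ (−1)^{q_k} s_N + q_k π (mod 2π) for k = 1,…,N−1. Then the Hessian determinant at θ equals det 𝓗(θ) = (cos s_N)^{N−1} · (1 + Σ_{k=1}^{N−1} (−1)^{q_k}) · Π_{j=1}^{N−1} (−1)^{q_j}. -/

import Mathlib

open Real Filter

/-- The variable `s k = φ k + θ (k+1) - θ k` (indices cyclic mod `N`,
0-based; paper index `k` corresponds to `k-1` here, so `s_N` is `sVar` at `lastIdx`). -/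
noncomputable def sVar (N : ℕ) (hN : 0 < N) (φ θ : Fin N → ℝ) (k : Fin N) : ℝ :=
  φ k + θ ⟨((k : ℕ) + 1) % N, Nat.mod_lt _ hN⟩ - θ k

/-- The lattice Landau gauge functional / random phase XY Hamiltonian
`F_φ(θ) = Σ_k (1 - cos(φ_k + θ_{k+1} - θ_k))` with periodic boundary conditions. -/
noncomputable def Fxy (N : ℕ) (hN : 0 < N) (φ θ : Fin N → ℝ) : ℝ :=
  ∑ k : Fin N, (1 - Real.cos (sVar N hN φ θ k))

/-- The index of the fixed site (paper site `N`). -/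
def lastIdx (N : ℕ) (hN : 0 < N) : Fin N :=
  ⟨N - 1, Nat.sub_lt hN Nat.one_pos⟩

/-- `θ` is a stationary point of `F_φ` regarded as a function of the free
coordinates `θ_1, …, θ_{N-1}` (0-based: coordinates `k` with `k < N-1`),
with `θ` at `lastIdx` held fixed: all partial derivatives vanish. -/
noncomputable def IsStationaryPt (N : ℕ) (hN : 0 < N) (φ θ : Fin N → ℝ) : Prop :=
  ∀ k : Fin N, (k : ℕ) < N - 1 →
    deriv (fun t : ℝ => Fxy N hN φ (Function.update θ k t)) (θ k) = 0

/-- The `(N-1) × (N-1)` tridiagonal matrix with entries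
`δ_{ij}(c_{i-1} + c_i) - δ_{i-1,j} c_{i-1} - δ_{i+1,j} c_i`, where indices are
0-based (paper index `i` ↦ `i-1`) and `c_0 := c_N` (cyclic predecessor). -/
noncomputable def hessC (N : ℕ) (hN : 0 < N) (c : Fin N → ℝ) :
    Matrix (Fin (N - 1)) (Fin (N - 1)) ℝ :=
  Matrix.of fun i j =>
    (if i = j then
        c ⟨((i : ℕ) + (N - 1)) % N, Nat.mod_lt _ hN⟩ +
          c ⟨(i : ℕ), lt_of_lt_of_le i.isLt (Nat.sub_le N 1)⟩
      else 0)
    - (if (i : ℕ) = (j : ℕ) + 1 then c ⟨((i : ℕ) + (N - 1)) % N, Nat.mod_lt _ hN⟩ else 0)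
    - (if (j : ℕ) = (i : ℕ) + 1 then c ⟨(i : ℕ), lt_of_lt_of_le i.isLt (Nat.sub_le N 1)⟩ else 0)

/-- The Hessian of `F_φ` (with the last coordinate fixed) at a configuration `θ`. -/
noncomputable def hessAt (N : ℕ) (hN : 0 < N) (φ θ : Fin N → ℝ) :
    Matrix (Fin (N - 1)) (Fin (N - 1)) ℝ :=
  hessC N hN fun k => Real.cos (sVar N hN φ θ k)

/-- `F_φ` as a function of the free coordinates only: the coordinate at
`lastIdx` is overwritten by `0`. -/
noncomputable def FxyFixed (N : ℕ) (hN : 0 < N) (φ : Fin N → ℝ) (η : Fin N → ℝ) : ℝ :=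
  Fxy N hN φ (Function.update η (lastIdx N hN) 0)

/-- The value `σ = (Φ + 2πl - π Σ_{k=1}^{N-1} q_k) / (1 + Σ_{k=1}^{N-1} (-1)^{q_k})`. -/
noncomputable def sigmaVal (N : ℕ) (hN : 0 < N) (φ : Fin N → ℝ) (q : Fin N → ℕ) (l : ℤ) : ℝ :=
  ((∑ k, φ k) + 2 * Real.pi * (l : ℝ)
      - Real.pi * ∑ k ∈ Finset.univ.erase (lastIdx N hN), (q k : ℝ)) /
    (1 + ∑ k ∈ Finset.univ.erase (lastIdx N hN), (-1 : ℝ) ^ (q k))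


/-!
At a labelled stationary point every weight `c_k = cos s_k` equals `ε_k C` with `C = cos s_N`
and `ε_k = (-1)^{q_k}`, because `cos((-1)^q x + qπ) = (-1)^q cos x`. The Hessian is the weighted
Laplacian of the `N`-cycle with the vertex `N` grounded; cutting the cycle there turns it into the
Dirichlet Laplacian of a path, whose determinant satisfies the continuant recursion and equals
the spanning-tree sum `Σ_m Π_{j ≠ m} c_j`. Since `ε_j² = 1`, this sum is `C^{N-1} (Σ ε) (Π ε)`.
-/

open Finset

/-- Laplacian of the path `0 — 1 — ⋯ — n+1` with weight `u j` on the edge `{j, j+1}`, restricted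
to the interior vertices `1, …, n` (row `i` is vertex `i + 1`). -/
def groundedPathLaplacian {R : Type*} [CommRing R] (n : ℕ) (u : ℕ → R) :
    Matrix (Fin n) (Fin n) R :=
  Matrix.of fun i j =>
    if (i : ℕ) = j then u i + u (i + 1)
    else if (j : ℕ) = i + 1 then -u (i + 1)
    else if (i : ℕ) = j + 1 then -u i
    else 0

section GroundedPathLaplacian

variable {R : Type*} [CommRing R]

theorem groundedPathLaplacian_submatrix (u : ℕ → R) {m n : ℕ} (f g : Fin n → Fin m)
    (hf : ∀ i, (f i : ℕ) = i) (hg : ∀ j, (g j : ℕ) = j) :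
    (groundedPathLaplacian m u).submatrix f g = groundedPathLaplacian n u := by
  ext i j
  simp only [groundedPathLaplacian, Matrix.submatrix_apply, Matrix.of_apply, hf, hg]

theorem groundedPathLaplacian_apply_eq_zero (u : ℕ → R) {n : ℕ} {i j : Fin n}
    (h : (i : ℕ) + 1 < j ∨ (j : ℕ) + 1 < i) : groundedPathLaplacian n u i j = 0 := by
  simp only [groundedPathLaplacian, Matrix.of_apply]
  rw [if_neg (by omega), if_neg (by omega), if_neg (by omega)]

-- the minor obtained from deleting the last row and the next-to-last column
theorem det_groundedPathLaplacian_submatrix_castSucc_succAbove (u : ℕ → R) (n : ℕ) :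
    ((groundedPathLaplacian (n + 2) u).submatrix Fin.castSucc
        (Fin.succAbove (Fin.last n).castSucc)).det =
      -u (n + 1) * (groundedPathLaplacian n u).det := by
  set M := (groundedPathLaplacian (n + 2) u).submatrix Fin.castSucc
    (Fin.succAbove (Fin.last n).castSucc)
  -- the last column of `M` has the single entry `-u (n + 1)`, in its last row
  have hlast : M (Fin.last n) (Fin.last n) = -u (n + 1) := by
    simp only [M, Matrix.submatrix_apply, Fin.succAbove_castSucc_self, Fin.succ_last,
      groundedPathLaplacian, Matrix.of_apply, Fin.val_last, Fin.val_castSucc]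
    rw [if_neg (by omega), if_pos trivial]
  rw [Matrix.det_succ_column M (Fin.last n), Fin.sum_univ_castSucc,
    sum_eq_zero fun i _ => by
      rw [show M i.castSucc (Fin.last n) = 0 from
        groundedPathLaplacian_apply_eq_zero u (by simp [i.isLt])]
      ring,
    hlast, Fin.succAbove_last, Matrix.submatrix_submatrix,
    groundedPathLaplacian_submatrix u (Fin.castSucc ∘ Fin.castSucc) _ (fun _ => rfl)
      (fun j => by simp [Fin.succAbove_castSucc_of_lt _ _ (Fin.castSucc_lt_last j)]),
    Fin.val_last, Even.neg_one_pow ⟨n, rfl⟩]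
  ring

theorem det_groundedPathLaplacian_add_two (u : ℕ → R) (n : ℕ) :
    (groundedPathLaplacian (n + 2) u).det =
      (u (n + 1) + u (n + 2)) * (groundedPathLaplacian (n + 1) u).det -
        u (n + 1) ^ 2 * (groundedPathLaplacian n u).det := by
  set L := groundedPathLaplacian (n + 2) u
  have hdiag : L (Fin.last (n + 1)) (Fin.last (n + 1)) = u (n + 1) + u (n + 2) := by
    simp [L, groundedPathLaplacian]
  have hsub : L (Fin.last (n + 1)) (Fin.last n).castSucc = -u (n + 1) := by
    simp only [L, groundedPathLaplacian, Matrix.of_apply, Fin.val_last, Fin.val_castSucc]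
    rw [if_neg (by omega), if_neg (by omega), if_pos trivial]
  rw [Matrix.det_succ_row L (Fin.last (n + 1)), Fin.sum_univ_castSucc, Fin.sum_univ_castSucc,
    sum_eq_zero fun j _ => by
      rw [show L _ j.castSucc.castSucc = 0 from groundedPathLaplacian_apply_eq_zero u (by simp)]
      ring,
    Fin.succAbove_last, groundedPathLaplacian_submatrix u Fin.castSucc Fin.castSucc
      (fun _ => rfl) (fun _ => rfl), det_groundedPathLaplacian_submatrix_castSucc_succAbove,
    hdiag, hsub]
  simp only [Fin.val_last, Fin.val_castSucc, show n + 1 + n = 2 * n + 1 by ring,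
    show n + 1 + (n + 1) = 2 * (n + 1) by ring, pow_succ, pow_mul]
  ring

theorem sum_prod_erase_range_add_two (u : ℕ → R) (n : ℕ) :
    ∑ k ∈ range (n + 2), ∏ j ∈ (range (n + 2)).erase k, u j =
      (∑ k ∈ range (n + 1), ∏ j ∈ (range (n + 1)).erase k, u j) * u (n + 1) +
        ∏ j ∈ range (n + 1), u j := by
  rw [sum_range_succ, range_add_one (n := n + 1), erase_insert notMem_range_self, sum_mul]
  congr 1
  refine sum_congr rfl fun k hk => ?_
  rw [erase_insert_of_ne (by simp at hk; omega), prod_insert (by simp), mul_comm]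

theorem det_groundedPathLaplacian :
    ∀ (n : ℕ) (u : ℕ → R),
      (groundedPathLaplacian n u).det = ∑ k ∈ range (n + 1), ∏ j ∈ (range (n + 1)).erase k, u j
  | 0, u => by simp
  | 1, u => by
    rw [Matrix.det_fin_one, sum_prod_erase_range_add_two u 0]
    simp [groundedPathLaplacian, add_comm]
  | n + 2, u => by
    rw [det_groundedPathLaplacian_add_two, det_groundedPathLaplacian (n + 1),
      det_groundedPathLaplacian n]
    linear_combination u (n + 1) * sum_prod_erase_range_add_two u n -
      sum_prod_erase_range_add_two u (n + 1) - prod_range_succ u (n + 1)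

end GroundedPathLaplacian

theorem sum_prod_erase_range_eq_sum_univ {R : Type*} [CommSemiring R] (N : ℕ) (f : ℕ → R) :
    ∑ k ∈ range N, ∏ j ∈ (range N).erase k, f j = ∑ k : Fin N, ∏ j ∈ univ.erase k, f j := by
  rw [← Fin.sum_univ_eq_sum_range (fun k => ∏ j ∈ (range N).erase k, f j)]
  refine sum_congr rfl fun k _ => ?_
  have hmap : (univ.erase k).map Fin.valEmbedding = (range N).erase k := by
    rw [map_erase, Fin.map_valEmbedding_univ, Nat.Iio_eq_range, Fin.valEmbedding_apply]
  rw [← hmap, prod_map, Fin.valEmbedding_apply]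

theorem sum_prod_erase_comp_equiv {ι R : Type*} [Fintype ι] [DecidableEq ι] [CommSemiring R]
    (e : ι ≃ ι) (c : ι → R) :
    ∑ k, ∏ j ∈ univ.erase k, c (e j) = ∑ m, ∏ j ∈ univ.erase m, c j := by
  rw [← e.sum_comp fun m => ∏ j ∈ univ.erase m, c j]
  exact sum_congr rfl fun k _ => prod_equiv e (by simp) fun _ _ => rfl

theorem sum_prod_erase_mul_of_mul_self_eq_one {ι R : Type*} [Fintype ι] [DecidableEq ι]
    [CommRing R] (ε : ι → R) (hε : ∀ i, ε i * ε i = 1) (C : R) :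
    ∑ m, ∏ j ∈ univ.erase m, ε j * C = C ^ (Fintype.card ι - 1) * (∑ m, ε m) * ∏ j, ε j := by
  have herase : ∀ m, ∏ j ∈ univ.erase m, ε j = ε m * ∏ j, ε j := fun m => by
    rw [← mul_prod_erase univ ε (mem_univ m), ← mul_assoc, hε, one_mul]
  simp only [prod_mul_distrib, prod_const, card_erase_of_mem (mem_univ _), card_univ, herase,
    ← sum_mul]
  ring

theorem cos_neg_one_pow_mul_add (x : ℝ) (q : ℕ) (m : ℤ) :
    Real.cos ((-1) ^ q * x + q * π + 2 * π * m) = (-1) ^ q * Real.cos x := by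
  have hcos : Real.cos ((-1) ^ q * x) = Real.cos x := by
    rcases neg_one_pow_eq_or ℝ q with h | h <;> simp [h]
  rw [show 2 * π * m = m * (2 * π) by ring, Real.cos_add_int_mul_two_pi, Real.cos_add,
    Real.cos_nat_mul_pi, Real.sin_nat_mul_pi, hcos]
  ring

theorem val_finRotate_symm {N : ℕ} (hN : 0 < N) (j : Fin N) :
    ((finRotate N).symm j : ℕ) = (j + (N - 1)) % N := by
  obtain ⟨n, rfl⟩ := Nat.exists_eq_add_one_of_ne_zero hN.ne'
  rw [finRotate_symm_apply, Fin.sub_def]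
  rcases n with _ | n
  · simp
  · simp [Nat.mod_eq_of_lt, add_comm]

theorem hessC_eq_groundedPathLaplacian (N : ℕ) (hN : 0 < N) (c : Fin N → ℝ) :
    hessC N hN c =
      groundedPathLaplacian (N - 1) fun j => c ⟨(j + (N - 1)) % N, Nat.mod_lt _ hN⟩ := by
  ext i j
  have hsucc : (⟨((i : ℕ) + 1 + (N - 1)) % N, Nat.mod_lt _ hN⟩ : Fin N) = ⟨i, by omega⟩ := by
    refine Fin.ext_iff.mpr (show ((i : ℕ) + 1 + (N - 1)) % N = i from ?_)
    rw [show (i : ℕ) + 1 + (N - 1) = i + N by omega, Nat.add_mod_right,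
      Nat.mod_eq_of_lt (by omega)]
  simp only [hessC, groundedPathLaplacian, Matrix.of_apply, hsucc, Fin.ext_iff]
  split_ifs <;> first | ring1 | (exfalso; omega)

theorem det_hessC (N : ℕ) (hN : 0 < N) (c : Fin N → ℝ) :
    (hessC N hN c).det = ∑ m, ∏ j ∈ univ.erase m, c j := by
  have hrot : ∀ j : Fin N, c ⟨(j + (N - 1)) % N, Nat.mod_lt _ hN⟩ = c ((finRotate N).symm j) :=
    fun j => congrArg c (Fin.ext (val_finRotate_symm hN j).symm)
  rw [hessC_eq_groundedPathLaplacian, det_groundedPathLaplacian, Nat.sub_add_cancel hN,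
    sum_prod_erase_range_eq_sum_univ]
  simp only [hrot]
  exact sum_prod_erase_comp_equiv _ c

/-- at a stationary point labelled by `q_1, …, q_{N-1} ∈ {0,1}`
(i.e. `s_k ≡ (-1)^{q_k} s_N + q_k π (mod 2π)`), the Hessian determinant equals
`(cos s_N)^{N-1} (1 + Σ_{k=1}^{N-1} (-1)^{q_k}) Π_{j=1}^{N-1} (-1)^{q_j}`. -/
theorem stmt7 (N : ℕ) (hN : 3 ≤ N) (φ θ : Fin N → ℝ)
    (q : Fin N → ℕ) (hqlast : q (lastIdx N (by omega)) = 0)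
    (hlabel : ∀ k : Fin N, (k : ℕ) < N - 1 →
      ∃ m : ℤ, sVar N (by omega) φ θ k =
        (-1 : ℝ) ^ (q k) * sVar N (by omega) φ θ (lastIdx N (by omega)) + (q k : ℝ) * π
          + 2 * π * m) :
    (hessAt N (by omega) φ θ).det =
      (Real.cos (sVar N (by omega) φ θ (lastIdx N (by omega)))) ^ (N - 1) *
        (1 + ∑ k ∈ Finset.univ.erase (lastIdx N (by omega)), (-1 : ℝ) ^ (q k)) *
        ∏ j ∈ Finset.univ.erase (lastIdx N (by omega)), (-1 : ℝ) ^ (q j) := by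
  have hcos : ∀ k, Real.cos (sVar N (by omega) φ θ k) =
      (-1) ^ q k * Real.cos (sVar N (by omega) φ θ (lastIdx N (by omega))) := by
    intro k
    by_cases hk : (k : ℕ) < N - 1
    · obtain ⟨m, hm⟩ := hlabel k hk
      rw [hm, cos_neg_one_pow_mul_add]
    · have hk' : k = lastIdx N (by omega) := Fin.ext (by simp only [lastIdx]; omega)
      rw [hk', hqlast, pow_zero, one_mul]
  have hsign : ∀ k, (-1 : ℝ) ^ q k * (-1) ^ q k = 1 := fun k => by
    rw [← mul_pow, neg_one_mul, neg_neg, one_pow]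
  rw [hessAt, det_hessC, sum_congr rfl fun m _ => prod_congr rfl fun j _ => hcos j,
    sum_prod_erase_mul_of_mul_self_eq_one _ hsign, Fintype.card_fin,
    ← add_sum_erase _ _ (mem_univ (lastIdx N _)), ← mul_prod_erase _ _ (mem_univ (lastIdx N _)),
    hqlast, pow_zero, one_mul]
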